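/- arXiv:2203.14670 — 5 statements merged into one kernel-verified Lean document; each statement's English description precedes it below -/
import Mathlib

section
/- Let X be a complex Banach space, let Ω be a nonempty bounded open connected subset of ℂ, let T ∈ B₁(Ω), and let λ₀ ∈ Ω. Then the closed linear span of ⋃_{k≥1} ker((T − λ₀)^k) equals X. -/
/-!
Let `L` be a continuous linear map killing every generalized eigenvector of `T` at `λ₀` (in the
end, the quotient map by their closed span). Near `μ ∈ Ω`, a continuous right inverse `S` of
`T - μ` and a nonzero `x ∈ ker (T - μ)` give the holomorphic frame `γ z = (1 - (z - μ) S)⁻¹ x` of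
the line bundle `z ↦ ker (T - z)`, so `ker (T - z) ⊆ ker L` exactly where the holomorphic function
`L (γ z)` vanishes. At `μ = λ₀` it vanishes identically, because `γ z = ∑ (z - λ₀)ⁿ Sⁿ x` and
`Sⁿ x ∈ ker (T - λ₀)ⁿ⁺¹`. By the identity theorem the set of points near which
`ker (T - z) ⊆ ker L` is open and closed in `Ω`, hence all of `Ω`; so `ker L` contains the dense
span of the eigenvectors.
-/

/-- The Cowen–Douglas class `B₁(Ω)`: `Ω ⊆ σ(T)`; the closed linear span of
`⋃_{λ∈Ω} ker(T − λ)` is all of `X`; `T − λ` is surjective for every `λ ∈ Ω`; and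
`dim ker(T − λ) = 1` for every `λ ∈ Ω`. -/
def MemCowenDouglasOne {X : Type*} [NormedAddCommGroup X] [NormedSpace ℂ X]
    (Ω : Set ℂ) (T : X →L[ℂ] X) : Prop :=
  Ω ⊆ spectrum ℂ T ∧
  (Submodule.span ℂ
      (⋃ μ ∈ Ω, ((LinearMap.ker ((T - μ • (1 : X →L[ℂ] X) : X →L[ℂ] X) : X →ₗ[ℂ] X) : Submodule ℂ X) : Set X))
    ).topologicalClosure = ⊤ ∧
  (∀ μ ∈ Ω, Function.Surjective (T - μ • (1 : X →L[ℂ] X))) ∧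
  (∀ μ ∈ Ω, Module.finrank ℂ (LinearMap.ker ((T - μ • (1 : X →L[ℂ] X) : X →L[ℂ] X) : X →ₗ[ℂ] X)) = 1)

open Filter Topology

namespace ContinuousLinearMap.HasRightInverse

variable {𝕜 E F : Type*} [NontriviallyNormedField 𝕜] [NormedAddCommGroup E] [NormedSpace 𝕜 E]
  [CompleteSpace E] [NormedAddCommGroup F] [NormedSpace 𝕜 F] [CompleteSpace F]

theorem of_surjective_of_closedComplemented_ker {f : E →L[𝕜] F} (hf : Function.Surjective f)
    (hker : f.ker.ClosedComplemented) : f.HasRightInverse := by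
  obtain ⟨p, hp⟩ := hker
  have : CompleteSpace f.ker := f.isClosed_ker.completeSpace_coe
  let e := f.equivProdOfSurjectiveOfIsCompl p (LinearMap.range_eq_top.2 hf)
    (LinearMap.range_eq_top.2 fun x => ⟨x, hp x⟩) (LinearMap.isCompl_of_proj hp)
  exact ⟨e.symm.toContinuousLinearMap ∘L ContinuousLinearMap.inl 𝕜 F f.ker,
    fun y => congrArg Prod.fst (e.apply_symm_apply (y, 0))⟩

end ContinuousLinearMap.HasRightInverse

theorem Submodule.le_ker_iff_of_finrank_eq_one {𝕜 E F : Type*} [Field 𝕜] [AddCommGroup E]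
    [Module 𝕜 E] [AddCommGroup F] [Module 𝕜 F] {K : Submodule 𝕜 E} (hK : Module.finrank 𝕜 K = 1)
    {u : E} (hu : u ∈ K) (hu0 : u ≠ 0) (L : E →ₗ[𝕜] F) : K ≤ L.ker ↔ L u = 0 := by
  refine ⟨fun h => h hu, fun hLu v hv => ?_⟩
  obtain ⟨c, hc⟩ := (finrank_eq_one_iff_of_nonzero' (⟨u, hu⟩ : K) (by simpa using hu0)).1 hK ⟨v, hv⟩
  have hv : c • u = v := congrArg Subtype.val hc
  rw [LinearMap.mem_ker, ← hv, map_smul, hLu, smul_zero]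

section KernelFrame

variable {𝕜 E F : Type*} [NontriviallyNormedField 𝕜] [NormedAddCommGroup E] [NormedSpace 𝕜 E]
  [NormedAddCommGroup F] [NormedSpace 𝕜 F] {T : E →L[𝕜] E}

theorem eventually_norm_sub_smul_lt_one (S : E →L[𝕜] E) (μ : 𝕜) :
    ∀ᶠ z in 𝓝 μ, ‖(z - μ) • S‖ < 1 :=
  (by fun_prop : Continuous fun z : 𝕜 => ‖(z - μ) • S‖).continuousAt.eventually_lt
    continuousAt_const (by simp)

theorem ContinuousLinearMap.apply_inverse_apply {B : E →L[𝕜] E} (hB : IsUnit B) (x : E) :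
    B (Ring.inverse B x) = x :=
  congr($(Ring.mul_inverse_cancel B hB) x)

theorem pow_succ_apply_pow_apply_eq_zero {A S : E →L[𝕜] E} (hS : Function.RightInverse S A)
    {x : E} (hx : A x = 0) (n : ℕ) : (A ^ (n + 1)) ((S ^ n) x) = 0 := by
  induction n with
  | zero => simpa using hx
  | succ n ih => rw [pow_succ _ (n + 1), pow_succ' S, mul_apply_eq_comp, mul_apply_eq_comp, hS, ih]

variable [CompleteSpace E]

theorem sub_smul_one_apply_inverse_one_sub_smul_apply {A S : E →L[𝕜] E}
    (hS : Function.RightInverse S A) {x : E} (hx : A x = 0) {t : 𝕜} (ht : ‖t • S‖ < 1) :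
    (A - t • 1) (Ring.inverse (1 - t • S) x) = 0 := by
  set u := Ring.inverse (1 - t • S) x
  have hu : u = x + t • S u := by
    have := ContinuousLinearMap.apply_inverse_apply (isUnit_one_sub_of_norm_lt_one ht) x
    simp only [sub_apply, smul_apply, one_apply_eq_self] at this
    rw [← this, sub_add_cancel]
  have hAu : A u = t • u := by
    conv_lhs => rw [hu]
    rw [map_add, map_smul, hx, hS, zero_add]
  simp [hAu]

theorem inverse_one_sub_smul_apply_ne_zero {S : E →L[𝕜] E} {x : E} (hx : x ≠ 0) {t : 𝕜}
    (ht : ‖t • S‖ < 1) : Ring.inverse (1 - t • S) x ≠ 0 := by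
  intro h
  apply hx
  rw [← ContinuousLinearMap.apply_inverse_apply (isUnit_one_sub_of_norm_lt_one ht) x, h, map_zero]

theorem analyticAt_inverse_one_sub_smul_apply (S : E →L[𝕜] E) (x : E) (μ : 𝕜) :
    AnalyticAt 𝕜 (fun z => Ring.inverse (1 - (z - μ) • S) x) μ := by
  have hinv : AnalyticAt 𝕜 (fun z => Ring.inverse (1 - (z - μ) • S)) μ := by
    refine AnalyticAt.comp (g := fun B : E →L[𝕜] E => Ring.inverse (1 - B)) ?_ (by fun_prop)
    simpa using analyticAt_inverse_one_sub 𝕜 (E →L[𝕜] E)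
  exact ((ContinuousLinearMap.apply 𝕜 E x).analyticAt _).comp hinv

theorem map_inverse_one_sub_smul_apply_eq_zero (L : E →L[𝕜] F) {S : E →L[𝕜] E} {x : E}
    (hL : ∀ n, L ((S ^ n) x) = 0) {t : 𝕜} (ht : ‖t • S‖ < 1) :
    L (Ring.inverse (1 - t • S) x) = 0 := by
  have hsum := (hasSum_geom_series_inverse _ ht).mapL (L ∘L ContinuousLinearMap.apply 𝕜 E x)
  simp only [ContinuousLinearMap.comp_apply, ContinuousLinearMap.apply_apply, smul_pow,
    map_smul, hL, smul_zero] at hsum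
  exact hsum.unique hasSum_zero

theorem eventually_ker_sub_smul_one_le_ker_iff {μ : 𝕜} {S : E →L[𝕜] E}
    (hS : Function.RightInverse S (T - μ • 1 : E →L[𝕜] E)) {x : E} (hx : x ∈ (T - μ • 1).ker)
    (hx0 : x ≠ 0) (hdim : ∀ᶠ z in 𝓝 μ, Module.finrank 𝕜 (T - z • 1).ker = 1) (L : E →L[𝕜] F) :
    ∀ᶠ z in 𝓝 μ, ((T - z • 1).ker ≤ L.ker ↔ L (Ring.inverse (1 - (z - μ) • S) x) = 0) := by
  filter_upwards [hdim, eventually_norm_sub_smul_lt_one S μ] with z hdimz hz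
  have hmem : Ring.inverse (1 - (z - μ) • S) x ∈ (T - z • 1).ker := by
    have := sub_smul_one_apply_inverse_one_sub_smul_apply hS hx hz
    rwa [sub_sub, ← add_smul, add_sub_cancel] at this
  exact Submodule.le_ker_iff_of_finrank_eq_one hdimz hmem
    (inverse_one_sub_smul_apply_ne_zero hx0 hz) (L : E →ₗ[𝕜] F)

end KernelFrame

theorem IsPreconnected.forall_of_eventually_of_locally_analytic_zeros {𝕜 F : Type*}
    [NontriviallyNormedField 𝕜] [NormedAddCommGroup F] [NormedSpace 𝕜 F] {Ω : Set 𝕜}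
    (hΩ : IsPreconnected Ω) {P : 𝕜 → Prop}
    (hloc : ∀ μ ∈ Ω, ∃ g : 𝕜 → F, AnalyticAt 𝕜 g μ ∧ ∀ᶠ z in 𝓝 μ, (P z ↔ g z = 0))
    {z₀ : 𝕜} (hz₀ : z₀ ∈ Ω) (h₀ : ∀ᶠ z in 𝓝 z₀, P z) : ∀ μ ∈ Ω, P μ := by
  have hcover : Ω ⊆ {z | ∀ᶠ w in 𝓝 z, P w} ∪ {z | ∀ᶠ w in 𝓝[≠] z, ¬P w} := fun μ hμ => by
    obtain ⟨g, hg, hiff⟩ := hloc μ hμ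
    rcases hg.eventually_eq_zero_or_eventually_ne_zero with h | h
    · exact Or.inl (by filter_upwards [h, hiff] with z hz hzP using hzP.2 hz)
    · refine Or.inr ?_
      filter_upwards [h, nhdsWithin_le_nhds hiff] with z hz hzP
      exact fun hP => hz (hzP.1 hP)
  have hdisj : Disjoint {z | ∀ᶠ w in 𝓝 z, P w} {z | ∀ᶠ w in 𝓝[≠] z, ¬P w} :=
    Set.disjoint_left.2 fun z hP hnP =>
      ((Filter.Eventually.filter_mono nhdsWithin_le_nhds hP).and hnP).exists.elim
        fun _ hw => hw.2 hw.1
  exact fun μ hμ => (hΩ.subset_left_of_subset_union isOpen_setOfPred_eventually_nhds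
    isOpen_setOfPred_eventually_nhdsWithin hdisj hcover ⟨z₀, hz₀, h₀⟩ hμ).self_of_nhds

theorem forall_ker_sub_smul_one_le_ker {𝕜 E F : Type*} [RCLike 𝕜] [NormedAddCommGroup E]
    [NormedSpace 𝕜 E] [CompleteSpace E] [NormedAddCommGroup F] [NormedSpace 𝕜 F]
    {T : E →L[𝕜] E} {Ω : Set 𝕜} (hΩo : IsOpen Ω) (hΩc : IsPreconnected Ω)
    (hsurj : ∀ μ ∈ Ω, Function.Surjective (T - μ • 1 : E →L[𝕜] E))
    (hdim : ∀ μ ∈ Ω, Module.finrank 𝕜 (T - μ • 1).ker = 1) (L : E →L[𝕜] F) {z₀ : 𝕜}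
    (hz₀ : z₀ ∈ Ω) (hgen : ∀ n : ℕ, ((T - z₀ • 1) ^ (n + 1)).ker ≤ L.ker) :
    ∀ μ ∈ Ω, (T - μ • 1).ker ≤ L.ker := by
  have hframe : ∀ μ ∈ Ω, ∃ S : E →L[𝕜] E, Function.RightInverse S (T - μ • 1 : E →L[𝕜] E) ∧
      ∃ x ∈ (T - μ • 1).ker, x ≠ 0 := fun μ hμ => by
    have : FiniteDimensional 𝕜 (T - μ • 1).ker := .of_finrank_eq_succ (hdim μ hμ)
    obtain ⟨S, hS⟩ := ContinuousLinearMap.HasRightInverse.of_surjective_of_closedComplemented_ker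
      (hsurj μ hμ) (.of_finiteDimensional _)
    exact ⟨S, hS, Submodule.exists_mem_ne_zero_of_ne_bot
      (Submodule.one_le_finrank_iff.1 (hdim μ hμ).ge)⟩
  have hdim_near : ∀ μ ∈ Ω, ∀ᶠ z in 𝓝 μ, Module.finrank 𝕜 (T - z • 1).ker = 1 :=
    fun μ hμ => eventually_of_mem (hΩo.mem_nhds hμ) hdim
  refine hΩc.forall_of_eventually_of_locally_analytic_zeros (F := F) (fun μ hμ => ?_) hz₀ ?_
  · obtain ⟨S, hS, x, hx, hx0⟩ := hframe μ hμ
    exact ⟨_, (L.analyticAt _).comp (analyticAt_inverse_one_sub_smul_apply S x μ),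
      eventually_ker_sub_smul_one_le_ker_iff hS hx hx0 (hdim_near μ hμ) L⟩
  · obtain ⟨S, hS, x, hx, hx0⟩ := hframe z₀ hz₀
    filter_upwards [eventually_ker_sub_smul_one_le_ker_iff hS hx hx0 (hdim_near z₀ hz₀) L,
      eventually_norm_sub_smul_lt_one S z₀] with z hiff hz
    exact hiff.2 <| map_inverse_one_sub_smul_apply_eq_zero L
      (fun n => hgen n (pow_succ_apply_pow_apply_eq_zero hS hx n)) hz

theorem closedSpan_ker_pow_eq_top_of_cowenDouglas_general
    (X : Type*) [NormedAddCommGroup X] [NormedSpace ℂ X] [CompleteSpace X]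
    (Ω : Set ℂ) (hop : IsOpen Ω)
    (hconn : IsConnected Ω)
    (T : X →L[ℂ] X) (hT : MemCowenDouglasOne Ω T) (lam0 : ℂ) (hlam0 : lam0 ∈ Ω) :
    (Submodule.span ℂ
        (⋃ k : ℕ,
          ((LinearMap.ker (((T - lam0 • (1 : X →L[ℂ] X)) ^ (k + 1) : X →L[ℂ] X) : X →ₗ[ℂ] X) : Submodule ℂ X) : Set X))
      ).topologicalClosure = ⊤ := by
  obtain ⟨-, hspan, hsurj, hdim⟩ := hT
  set M := (Submodule.span ℂ (⋃ k : ℕ, (((T - lam0 • 1) ^ (k + 1)).ker : Set X))).topologicalClosure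
  have hM : IsClosed (M : Set X) := Submodule.isClosed_topologicalClosure _
  have hgen : ∀ n : ℕ, ((T - lam0 • 1) ^ (n + 1)).ker ≤ M := fun n x hx =>
    Submodule.le_topologicalClosure _ (Submodule.subset_span (Set.mem_iUnion.2 ⟨n, hx⟩))
  have hker := forall_ker_sub_smul_one_le_ker hop hconn.isPreconnected hsurj hdim M.mkQL hlam0
    (by simpa using hgen)
  simp only [Submodule.toLinearMap_mkQL, Submodule.ker_mkQ] at hker
  rw [eq_top_iff, ← hspan]
  exact Submodule.topologicalClosure_minimal _ (Submodule.span_le.2 (Set.iUnion₂_subset hker)) hM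

/-- If `Ω` is a nonempty bounded open connected subset of `ℂ`,
`T ∈ B₁(Ω)` and `λ₀ ∈ Ω`, then the closed linear span of `⋃_{k≥1} ker((T − λ₀)^k)`
equals `X`. -/
theorem closedSpan_ker_pow_eq_top_of_cowenDouglas
    (X : Type*) [NormedAddCommGroup X] [NormedSpace ℂ X] [CompleteSpace X]
    (Ω : Set ℂ) (hne : Ω.Nonempty) (hbd : Bornology.IsBounded Ω) (hop : IsOpen Ω)
    (hconn : IsConnected Ω)
    (T : X →L[ℂ] X) (hT : MemCowenDouglasOne Ω T) (lam0 : ℂ) (hlam0 : lam0 ∈ Ω) :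
    (Submodule.span ℂ
        (⋃ k : ℕ,
          ((LinearMap.ker (((T - lam0 • (1 : X →L[ℂ] X)) ^ (k + 1) : X →L[ℂ] X) : X →ₗ[ℂ] X) : Submodule ℂ X) : Set X))
      ).topologicalClosure = ⊤ :=
  closedSpan_ker_pow_eq_top_of_cowenDouglas_general X Ω hop hconn T hT lam0 hlam0
end

section
/- Let X be a complex Banach space, let Ω be a nonempty bounded open connected subset of ℂ, and let T ∈ B₁(Ω). Then for every λ ∈ ℂ the range of T − λ is dense in X; equivalently, the adjoint T* has empty point spectrum, i.e., ker(T* − λ) = {0} for every λ ∈ ℂ. -/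
theorem Submodule.dense_of_forall_dual_eq_zero {𝕜 E : Type*} [RCLike 𝕜] [NormedAddCommGroup E]
    [NormedSpace 𝕜 E] (M : Submodule 𝕜 E)
    (h : ∀ φ : StrongDual 𝕜 E, (∀ x ∈ M, φ x = 0) → φ = 0) : Dense (M : Set E) := by
  rw [Submodule.dense_iff_topologicalClosure_eq_top, Submodule.eq_top_iff']
  intro x
  by_contra hx
  set N := M.topologicalClosure
  have : IsClosed (N : Set E) := M.isClosed_topologicalClosure
  have hNx : N.mkQL x ≠ 0 := by simpa [Submodule.Quotient.mk_eq_zero] using hx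
  obtain ⟨f, hfx⟩ := SeparatingDual.exists_ne_zero (R := 𝕜) hNx
  have hfN : f ∘L N.mkQL = 0 := h _ fun y hy => by
    simp [(Submodule.Quotient.mk_eq_zero N).2 (M.le_topologicalClosure hy)]
  exact hfx congr($hfN x)

section Eigenfunctional

variable {𝕜 X : Type*} [Field 𝕜] [TopologicalSpace 𝕜] [TopologicalSpace X] [AddCommGroup X]
  [Module 𝕜 X] [IsTopologicalAddGroup X] [ContinuousConstSMul 𝕜 X]
  {T : X →L[𝕜] X} {φ : X →L[𝕜] 𝕜} {lam : 𝕜}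

theorem ContinuousLinearMap.apply_sub_smul_one_eq_zero_iff (x : X) :
    φ ((T - lam • (1 : X →L[𝕜] X)) x) = 0 ↔ φ (T x) = lam * φ x := by
  simp [sub_eq_zero]

theorem ContinuousLinearMap.eq_zero_of_apply_eq_mul_of_surjective
    (hφ : ∀ x, φ (T x) = lam * φ x) (hsurj : Function.Surjective (T - lam • (1 : X →L[𝕜] X))) :
    φ = 0 := by
  ext y
  obtain ⟨x, rfl⟩ := hsurj y
  exact apply_sub_smul_one_eq_zero_iff x |>.2 (hφ x)

theorem ContinuousLinearMap.apply_eq_zero_of_mem_ker_sub_smul_one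
    (hφ : ∀ x, φ (T x) = lam * φ x) {μ : 𝕜} (hμ : μ ≠ lam) {x : X}
    (hx : x ∈ LinearMap.ker ((T - μ • (1 : X →L[𝕜] X) : X →L[𝕜] X) : X →ₗ[𝕜] X)) : φ x = 0 := by
  have hTx : T x = μ • x := by simpa [sub_eq_zero] using hx
  have : (μ - lam) * φ x = 0 := by rw [sub_mul, ← smul_eq_mul, ← map_smul, ← hTx, hφ, sub_self]
  exact (mul_eq_zero.1 this).resolve_left (sub_ne_zero.2 hμ)

theorem ContinuousLinearMap.eq_zero_of_apply_eq_mul_of_dense_span_ker [T2Space 𝕜] {Ω : Set 𝕜}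
    (hφ : ∀ x, φ (T x) = lam * φ x) (hlam : lam ∉ Ω)
    (hspan : Dense (Submodule.span 𝕜
      (⋃ μ ∈ Ω, (LinearMap.ker ((T - μ • (1 : X →L[𝕜] X) : X →L[𝕜] X) : X →ₗ[𝕜] X) : Set X)) :
        Set X)) :
    φ = 0 := by
  refine ext_on hspan fun x hx => ?_
  obtain ⟨μ, hμ, hx⟩ := Set.mem_iUnion₂.1 hx
  exact apply_eq_zero_of_mem_ker_sub_smul_one hφ (ne_of_mem_of_not_mem hμ hlam) hx

end Eigenfunctional

theorem MemCowenDouglasOne.eq_zero_of_apply_eq_mul {X : Type*} [NormedAddCommGroup X]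
    [NormedSpace ℂ X] {Ω : Set ℂ} {T : X →L[ℂ] X} (hT : MemCowenDouglasOne Ω T) {lam : ℂ}
    {φ : X →L[ℂ] ℂ} (hφ : ∀ x, φ (T x) = lam * φ x) : φ = 0 := by
  obtain ⟨-, hspan, hsurj, -⟩ := hT
  by_cases hlam : lam ∈ Ω
  · exact φ.eq_zero_of_apply_eq_mul_of_surjective (T := T) (lam := lam) hφ (hsurj lam hlam)
  · exact φ.eq_zero_of_apply_eq_mul_of_dense_span_ker (T := T) (Ω := Ω) hφ hlam
      (Submodule.dense_iff_topologicalClosure_eq_top.2 hspan)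

theorem range_dense_and_adjoint_no_eigenvalue_of_cowenDouglas_general
    (X : Type*) [NormedAddCommGroup X] [NormedSpace ℂ X]
    (Ω : Set ℂ)
    (T : X →L[ℂ] X) (hT : MemCowenDouglasOne Ω T) :
    (∀ lam : ℂ,
        Dense ((LinearMap.range ((T - lam • (1 : X →L[ℂ] X) : X →L[ℂ] X) : X →ₗ[ℂ] X) : Submodule ℂ X) : Set X)) ∧
    (∀ lam : ℂ, ∀ φ : X →L[ℂ] ℂ, (∀ x : X, φ (T x) = lam * φ x) → φ = 0) := by
  refine ⟨fun lam => ?_, fun lam φ hφ => hT.eq_zero_of_apply_eq_mul hφ⟩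
  refine Submodule.dense_of_forall_dual_eq_zero _ fun φ hφ =>
    hT.eq_zero_of_apply_eq_mul (lam := lam) fun x => ?_
  exact (φ.apply_sub_smul_one_eq_zero_iff (T := T) (lam := lam) x).1
    (hφ _ (LinearMap.mem_range_self _ x))

/-- If `Ω` is a nonempty bounded open connected subset of `ℂ` and
`T ∈ B₁(Ω)`, then for every `λ ∈ ℂ` the range of `T − λ` is dense in `X`;
equivalently, the adjoint `T*` has empty point spectrum: every continuous linear
functional `φ` with `φ ∘ T = λ • φ` vanishes. -/
theorem range_dense_and_adjoint_no_eigenvalue_of_cowenDouglas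
    (X : Type*) [NormedAddCommGroup X] [NormedSpace ℂ X] [CompleteSpace X]
    (Ω : Set ℂ) (hne : Ω.Nonempty) (hbd : Bornology.IsBounded Ω) (hop : IsOpen Ω)
    (hconn : IsConnected Ω)
    (T : X →L[ℂ] X) (hT : MemCowenDouglasOne Ω T) :
    (∀ lam : ℂ,
        Dense ((LinearMap.range ((T - lam • (1 : X →L[ℂ] X) : X →L[ℂ] X) : X →ₗ[ℂ] X) : Submodule ℂ X) : Set X)) ∧
    (∀ lam : ℂ, ∀ φ : X →L[ℂ] ℂ, (∀ x : X, φ (T x) = lam * φ x) → φ = 0) :=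
  range_dense_and_adjoint_no_eigenvalue_of_cowenDouglas_general X Ω T hT
end

section
/- Let X be a complex Banach space, let Ω be a nonempty bounded open connected subset of ℂ with 0 ∈ Ω, let T ∈ B₁(Ω), and let S ∈ B(X) satisfy T∘S = I. If x₀ is a nonzero vector in ker T, then x₀ is a cyclic vector of S, i.e., the closed linear span of {Sᵏx₀ : k ≥ 0} equals X. -/
/-!
Since `T S = 1`, we have `T - ν = T (1 - ν S)`, so for small `ν` the vector
`(1 - ν S)⁻¹ x₀ = ∑ νᵏ Sᵏ x₀` lies in `ker (T - ν)`, hence spans this line, and lies in the closed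
span `M` of the orbit of `x₀`. Near any `μ ∈ Ω`, a bounded right inverse `R` of `T - μ` (it exists
because `ker (T - μ)` is finite-dimensional, hence complemented) gives in the same way analytic
spanning vectors `(1 - (ν - μ) R)⁻¹ x` of `ker (T - ν)`. So a functional vanishing on `M` kills
`ker (T - ν)` for `ν` near `0`, hence, by the identity theorem and connectedness, for every
`ν ∈ Ω`; it then kills the dense span of these kernels and is zero. By Hahn–Banach, `M = X`.
-/

open Filter Topology Metric Module
open scoped Ring

theorem ContinuousLinearMap.HasRightInverse.of_surjective_of_closedComplemented_ker_s6
    {𝕜 E F : Type*} [NontriviallyNormedField 𝕜]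
    [NormedAddCommGroup E] [NormedSpace 𝕜 E] [CompleteSpace E]
    [NormedAddCommGroup F] [NormedSpace 𝕜 F] [CompleteSpace F]
    {W : E →L[𝕜] F} (hW : Function.Surjective W) (hker : W.ker.ClosedComplemented) :
    W.HasRightInverse := by
  obtain ⟨P, hP⟩ := hker
  have : CompleteSpace W.ker := W.isClosed_ker.completeSpace_coe
  let e := W.equivProdOfSurjectiveOfIsCompl P (LinearMap.range_eq_top_of_surjective _ hW)
    (LinearMap.range_eq_top_of_surjective _ fun x => ⟨x, hP x⟩)
    (ContinuousLinearMap.isTopCompl_of_proj hP).isCompl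
  exact ⟨e.symm.toContinuousLinearMap ∘L ContinuousLinearMap.inl 𝕜 F W.ker,
    fun y => congr_arg Prod.fst (e.apply_symm_apply (y, 0))⟩

theorem Submodule.eq_span_singleton_of_finrank_eq_one {K V : Type*} [DivisionRing K]
    [AddCommGroup V] [Module K V] {p : Submodule K V} (hp : finrank K p = 1) {y : V}
    (hy : y ∈ p) (hy0 : y ≠ 0) : p = K ∙ y := by
  have : FiniteDimensional K p := .of_finrank_pos (by rw [hp]; exact one_pos)
  exact (eq_of_le_of_finrank_eq ((span_singleton_le_iff_mem y p).2 hy)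
    (by rw [finrank_span_singleton hy0, hp])).symm

theorem Submodule.topologicalClosure_eq_top_of_forall_dual {𝕜 E : Type*} [RCLike 𝕜]
    [NormedAddCommGroup E] [NormedSpace 𝕜 E] (p : Submodule 𝕜 E)
    (h : ∀ f : StrongDual 𝕜 E, p ≤ LinearMap.ker (f : E →ₗ[𝕜] 𝕜) → f = 0) :
    p.topologicalClosure = ⊤ := by
  set q := p.topologicalClosure
  have : IsClosed (q : Set E) := p.isClosed_topologicalClosure
  rw [eq_top_iff']
  intro x
  rw [← Submodule.Quotient.mk_eq_zero]
  refine SeparatingDual.eq_zero_of_forall_dual_eq_zero (R := 𝕜) fun g => ?_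
  have hg : g ∘L q.mkQL = 0 := h _ fun y hy => by
    simp [(Submodule.Quotient.mk_eq_zero q).2 (p.le_topologicalClosure hy)]
  exact congr($hg x)

namespace ContinuousLinearMap

variable {𝕜 X : Type*} [NontriviallyNormedField 𝕜] [NormedAddCommGroup X] [NormedSpace 𝕜 X]

theorem ker_sub_smul_one_eq_eigenspace (T : X →L[𝕜] X) (μ : 𝕜) :
    LinearMap.ker ((T - μ • 1 : X →L[𝕜] X) : X →ₗ[𝕜] X) = End.eigenspace (T : End 𝕜 X) μ := by
  ext y
  simp [sub_eq_zero]

theorem apply_ring_inverse_apply {u : X →L[𝕜] X} (hu : IsUnit u) (x : X) : u (u⁻¹ʳ x) = x := by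
  rw [← mul_apply_eq_comp, Ring.mul_inverse_cancel u hu, one_apply_eq_self]

theorem ring_inverse_apply_ne_zero {u : X →L[𝕜] X} (hu : IsUnit u) {x : X} (hx : x ≠ 0) :
    u⁻¹ʳ x ≠ 0 := by
  intro h
  rw [← apply_ring_inverse_apply hu x, h, map_zero] at hx
  exact hx rfl

theorem ring_inverse_apply_mem_eigenspace {T R : X →L[𝕜] X} {μ ν : 𝕜}
    (hR : (T - μ • 1) * R = 1) {x : X} (hx : x ∈ End.eigenspace (T : End 𝕜 X) μ)
    (hu : IsUnit (1 - (ν - μ) • R)) :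
    (1 - (ν - μ) • R)⁻¹ʳ x ∈ End.eigenspace (T : End 𝕜 X) ν := by
  have hfactor : T - ν • 1 = (T - μ • 1) * (1 - (ν - μ) • R) := by
    rw [mul_sub, mul_one, mul_smul_comm, hR, sub_smul]
    abel
  rw [← ker_sub_smul_one_eq_eigenspace] at hx ⊢
  rwa [LinearMap.mem_ker, coe_coe, hfactor, mul_apply_eq_comp, apply_ring_inverse_apply hu]

theorem eventually_norm_sub_smul_lt_one (R : X →L[𝕜] X) (μ : 𝕜) :
    ∀ᶠ ν in 𝓝 μ, ‖(ν - μ) • R‖ < 1 := by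
  have : Tendsto (fun ν : 𝕜 => (ν - μ) • R) (𝓝 μ) (𝓝 ((μ - μ) • R)) :=
    ((continuous_id.sub continuous_const).smul continuous_const).tendsto μ
  rw [sub_self, zero_smul] at this
  exact this.norm.eventually (gt_mem_nhds (by simp))

variable [CompleteSpace X]

theorem analyticAt_ring_inverse_apply (R : X →L[𝕜] X) (x : X) {μ ν : 𝕜}
    (hu : IsUnit (1 - (ν - μ) • R)) :
    AnalyticAt 𝕜 (fun ν : 𝕜 => (1 - (ν - μ) • R)⁻¹ʳ x) ν := by
  have hinv : AnalyticAt 𝕜 Ring.inverse (1 - (ν - μ) • R) := by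
    simpa using analyticAt_inverse (𝕜 := 𝕜) hu.unit
  have hlin : AnalyticAt 𝕜 (fun ν : 𝕜 => 1 - (ν - μ) • R) ν := by fun_prop
  exact ((apply 𝕜 X x).analyticAt _).comp (hinv.comp_of_eq hlin rfl)

theorem eventually_eigenspace_eq_span_ring_inverse_apply {T R : X →L[𝕜] X} {μ : 𝕜}
    (hR : (T - μ • 1) * R = 1) {x : X} (hx : x ∈ End.eigenspace (T : End 𝕜 X) μ) (hx0 : x ≠ 0)
    (hfin : ∀ᶠ ν in 𝓝 μ, finrank 𝕜 (End.eigenspace (T : End 𝕜 X) ν) = 1) :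
    ∀ᶠ ν in 𝓝 μ, AnalyticAt 𝕜 (fun ν : 𝕜 => (1 - (ν - μ) • R)⁻¹ʳ x) ν ∧
      End.eigenspace (T : End 𝕜 X) ν = 𝕜 ∙ (1 - (ν - μ) • R)⁻¹ʳ x := by
  filter_upwards [eventually_norm_sub_smul_lt_one R μ, hfin] with ν hnorm hν
  have hu := isUnit_one_sub_of_norm_lt_one hnorm
  exact ⟨analyticAt_ring_inverse_apply R x hu, Submodule.eq_span_singleton_of_finrank_eq_one hν
    (ring_inverse_apply_mem_eigenspace hR hx hu) (ring_inverse_apply_ne_zero hu hx0)⟩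

theorem ring_inverse_one_sub_smul_apply_mem_closure_span_pow (S : X →L[𝕜] X) (x : X) {t : 𝕜}
    (ht : ‖t • S‖ < 1) :
    (1 - t • S)⁻¹ʳ x ∈
      (Submodule.span 𝕜 (Set.range fun k : ℕ => (S ^ k) x)).topologicalClosure := by
  have hsum : HasSum (fun n : ℕ => ((t • S) ^ n) x) ((1 - t • S)⁻¹ʳ x) :=
    (hasSum_geom_series_inverse _ ht).mapL (apply 𝕜 X x)
  refine (Submodule.isClosed_topologicalClosure _).mem_of_tendsto hsum.tendsto_sum_nat
    (Eventually.of_forall fun n => Submodule.sum_mem _ fun k _ => ?_)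
  rw [smul_pow, smul_apply]
  exact Submodule.smul_mem _ _ (Submodule.le_topologicalClosure _ (Submodule.subset_span ⟨k, rfl⟩))

end ContinuousLinearMap

theorem forall_le_ker_of_eventually_le_ker {𝕜 X F : Type*} [RCLike 𝕜] [NormedAddCommGroup X]
    [NormedSpace 𝕜 X] [NormedAddCommGroup F] [NormedSpace 𝕜 F] {Ω : Set 𝕜}
    (hΩ : IsPreconnected Ω) {L : 𝕜 → Submodule 𝕜 X}
    (hframe : ∀ μ ∈ Ω, ∃ y : 𝕜 → X, ∀ᶠ ν in 𝓝 μ, AnalyticAt 𝕜 y ν ∧ L ν = 𝕜 ∙ y ν)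
    {f : X →L[𝕜] F} {μ₀ : 𝕜} (hμ₀ : μ₀ ∈ Ω)
    (hf : ∀ᶠ ν in 𝓝 μ₀, L ν ≤ LinearMap.ker (f : X →ₗ[𝕜] F)) :
    ∀ μ ∈ Ω, L μ ≤ LinearMap.ker (f : X →ₗ[𝕜] F) := by
  set Z := {μ | ∀ᶠ ν in 𝓝 μ, L ν ≤ LinearMap.ker (f : X →ₗ[𝕜] F)}
  -- `Z` is open and, by the identity theorem for `f ∘ y` on a ball, closed in `Ω`.
  suffices Ω ⊆ Z from fun μ hμ => (this hμ).self_of_nhds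
  refine hΩ.subset_of_closure_inter_subset isOpen_setOfPred_eventually_nhds ⟨μ₀, hμ₀, hf⟩ ?_
  rintro μ ⟨hμZ, hμΩ⟩
  obtain ⟨y, hy⟩ := hframe μ hμΩ
  obtain ⟨r, hr, hball⟩ := Metric.eventually_nhds_iff_ball.1 hy
  obtain ⟨μ', hμ'B, hμ'Z⟩ := mem_closure_iff.1 hμZ _ isOpen_ball (mem_ball_self hr)
  have hvanish : Set.EqOn (fun ν => f (y ν)) 0 (ball μ r) := by
    refine AnalyticOnNhd.eqOn_zero_of_preconnected_of_eventuallyEq_zero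
      (fun ν hν => (f.analyticAt _).comp (hball ν hν).1) (convex_ball μ r).isPreconnected hμ'B ?_
    filter_upwards [hμ'Z, isOpen_ball.mem_nhds hμ'B] with ν hν hνB
    exact hν ((hball ν hνB).2 ▸ Submodule.mem_span_singleton_self _)
  filter_upwards [ball_mem_nhds μ hr] with ν hν
  rw [(hball ν hν).2, Submodule.span_singleton_le_iff_mem]
  exact hvanish hν

namespace MemCowenDouglasOne

variable {X : Type*} [NormedAddCommGroup X] [NormedSpace ℂ X] {Ω : Set ℂ} {T : X →L[ℂ] X}

theorem eventually_finrank_eigenspace (hT : MemCowenDouglasOne Ω T) (hΩ : IsOpen Ω) {μ : ℂ}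
    (hμ : μ ∈ Ω) : ∀ᶠ ν in 𝓝 μ, finrank ℂ (End.eigenspace (T : End ℂ X) ν) = 1 := by
  filter_upwards [hΩ.mem_nhds hμ] with ν hν
  rw [← T.ker_sub_smul_one_eq_eigenspace]
  exact hT.2.2.2 ν hν

theorem exists_analytic_frame [CompleteSpace X] (hT : MemCowenDouglasOne Ω T) (hΩ : IsOpen Ω)
    {μ : ℂ} (hμ : μ ∈ Ω) :
    ∃ y : ℂ → X, ∀ᶠ ν in 𝓝 μ, AnalyticAt ℂ y ν ∧ End.eigenspace (T : End ℂ X) ν = ℂ ∙ y ν := by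
  have hfin := hT.2.2.2 μ hμ
  have : FiniteDimensional ℂ (T - μ • 1).ker := .of_finrank_pos (by rw [hfin]; exact one_pos)
  obtain ⟨R, hR⟩ := ContinuousLinearMap.HasRightInverse.of_surjective_of_closedComplemented_ker_s6
    (hT.2.2.1 μ hμ) (.of_finiteDimensional _)
  obtain ⟨⟨x, hx⟩, hx0⟩ := finrank_pos_iff_exists_ne_zero.1 (hfin.symm ▸ one_pos)
  rw [T.ker_sub_smul_one_eq_eigenspace] at hx
  exact ⟨_, ContinuousLinearMap.eventually_eigenspace_eq_span_ring_inverse_apply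
    (ContinuousLinearMap.ext hR) hx (fun h => hx0 (Subtype.ext h))
    (hT.eventually_finrank_eigenspace hΩ hμ)⟩

theorem eq_zero_of_eventually_eigenspace_le_ker [CompleteSpace X] {F : Type*}
    [NormedAddCommGroup F] [NormedSpace ℂ F] (hT : MemCowenDouglasOne Ω T) (hΩ : IsOpen Ω)
    (hΩc : IsPreconnected Ω) {f : X →L[ℂ] F} {μ₀ : ℂ} (hμ₀ : μ₀ ∈ Ω)
    (hf : ∀ᶠ ν in 𝓝 μ₀, End.eigenspace (T : End ℂ X) ν ≤ LinearMap.ker (f : X →ₗ[ℂ] F)) :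
    f = 0 := by
  have hall := forall_le_ker_of_eventually_le_ker hΩc
    (fun μ hμ => hT.exists_analytic_frame hΩ hμ) hμ₀ hf
  have hspan : Submodule.span ℂ (⋃ μ ∈ Ω, (LinearMap.ker ((T - μ • 1 : X →L[ℂ] X) : X →ₗ[ℂ] X) :
      Set X)) ≤ LinearMap.ker (f : X →ₗ[ℂ] F) := by
    simp only [Submodule.span_le, Set.iUnion_subset_iff, T.ker_sub_smul_one_eq_eigenspace]
    exact hall
  have := Submodule.topologicalClosure_minimal _ hspan f.isClosed_ker
  rw [hT.2.1] at this
  ext x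
  exact this Submodule.mem_top

end MemCowenDouglasOne

theorem ker_vector_is_cyclic_for_right_inverse_general
    (X : Type*) [NormedAddCommGroup X] [NormedSpace ℂ X] [CompleteSpace X]
    (Ω : Set ℂ) (hop : IsOpen Ω)
    (hconn : IsConnected Ω) (h0 : (0 : ℂ) ∈ Ω)
    (T S : X →L[ℂ] X) (hT : MemCowenDouglasOne Ω T)
    (hTS : T.comp S = ContinuousLinearMap.id ℂ X)
    (x₀ : X) (hx₀ : x₀ ≠ 0) (hker : T x₀ = 0) :
    (Submodule.span ℂ (Set.range fun k : ℕ => (S ^ k) x₀)).topologicalClosure = ⊤ := by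
  have hS : (T - (0 : ℂ) • 1) * S = 1 := by rw [zero_smul, sub_zero]; exact hTS
  have hx : x₀ ∈ End.eigenspace (T : End ℂ X) 0 := by simpa using hker
  refine Submodule.topologicalClosure_eq_top_of_forall_dual _ fun f hf => ?_
  refine hT.eq_zero_of_eventually_eigenspace_le_ker hop hconn.isPreconnected h0 ?_
  filter_upwards [ContinuousLinearMap.eventually_eigenspace_eq_span_ring_inverse_apply hS hx hx₀
    (hT.eventually_finrank_eigenspace hop h0),
    S.eventually_norm_sub_smul_lt_one 0] with ν hν hnorm
  rw [hν.2, Submodule.span_singleton_le_iff_mem]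
  exact Submodule.topologicalClosure_minimal _ hf f.isClosed_ker
    (S.ring_inverse_one_sub_smul_apply_mem_closure_span_pow x₀ hnorm)

/-- Let `Ω` be a nonempty bounded open connected subset of `ℂ` with
`0 ∈ Ω`, let `T ∈ B₁(Ω)` and let `S ∈ B(X)` satisfy `T ∘ S = I`. If `x₀` is a nonzero
vector in `ker T`, then `x₀` is a cyclic vector of `S`: the closed linear span of
`{Sᵏx₀ : k ≥ 0}` equals `X`. -/
theorem ker_vector_is_cyclic_for_right_inverse
    (X : Type*) [NormedAddCommGroup X] [NormedSpace ℂ X] [CompleteSpace X]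
    (Ω : Set ℂ) (hne : Ω.Nonempty) (hbd : Bornology.IsBounded Ω) (hop : IsOpen Ω)
    (hconn : IsConnected Ω) (h0 : (0 : ℂ) ∈ Ω)
    (T S : X →L[ℂ] X) (hT : MemCowenDouglasOne Ω T)
    (hTS : T.comp S = ContinuousLinearMap.id ℂ X)
    (x₀ : X) (hx₀ : x₀ ≠ 0) (hker : T x₀ = 0) :
    (Submodule.span ℂ (Set.range fun k : ℕ => (S ^ k) x₀)).topologicalClosure = ⊤ :=
  ker_vector_is_cyclic_for_right_inverse_general X Ω hop hconn h0 T S hT hTS x₀ hx₀ hker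
end

section
/- Let X be a complex Banach space and let A, B ∈ B(X) satisfy A∘B = I and dim ker A = 1. Suppose there is a nonzero vector x ∈ ker A such that the closed linear span of {Bⁿx : n ≥ 0} equals X. Then A ∈ B₁(Ω_A), where Ω_A is the connected component containing the origin of the semi-Fredholm domain ρ_{s-F}(A) = {λ ∈ ℂ : ran(A − λ) is closed and at least one of ker(A − λ), X/ran(A − λ) is finite-dimensional}. In particular, for every λ ∈ ℂ with |λ| < 1/‖B‖, A − λ is surjective with dim ker(A − λ) = 1, and the closed linear span of ⋃_{|λ|<1/‖B‖} ker(A − λ) equals X. -/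
/-!
Since `A B = 1`, `A - λ = A (1 - λ B)`, and `1 - λ B` is invertible for `‖λ‖ ‖B‖ < 1`, so
`A - λ` is surjective and its kernel is `(1 - λ B)⁻¹ (ker A)`, spanned by
`k_λ = (1 - λ B)⁻¹ x = ∑ λⁿ Bⁿ x`. As `λ → 0`, each `Bⁿ x` is a limit of combinations of the
`k_λ`, so by cyclicity any closed subspace containing the `k_λ` for small `λ ≠ 0` is `X`.

Let `G` be the set of `μ` for which `A - μ` is surjective with one-dimensional kernel. Such an
`A - μ` has a right inverse `S`, and `A - μ - z = (A - μ)(1 - z S)`, so `G` is open. If `μ` is a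
limit point of `G` at which `A - μ` has closed range, that range contains every `k_λ` with
`λ ≠ μ`, so `A - μ` is surjective. It is not injective, since `μ` lies in the closed spectrum,
and its kernel contains no two independent vectors, because surjectivity of `(A - μ, P)` onto
`X × V` (`V` spanned by such vectors, `P` a projection onto `V`) survives small perturbations
and would put two independent vectors in the kernels of `A - ν` for every `ν` near `μ`. Thus
`G` is relatively clopen in the connected component `Ω_A`, and it contains `0`.
-/

open Filter Topology Function

/-- An operator is semi-Fredholm if its range is closed and at least one of its kernel
and its cokernel is finite-dimensional. -/
def IsSemiFredholmOp {X : Type*} [NormedAddCommGroup X] [NormedSpace ℂ X]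
    (A : X →L[ℂ] X) : Prop :=
  IsClosed ((LinearMap.range (A : X →ₗ[ℂ] X) : Submodule ℂ X) : Set X) ∧
    (FiniteDimensional ℂ (LinearMap.ker (A : X →ₗ[ℂ] X)) ∨ FiniteDimensional ℂ (X ⧸ LinearMap.range (A : X →ₗ[ℂ] X)))

/-- The semi-Fredholm domain `ρ_{s-F}(A) = {λ ∈ ℂ : A − λ is semi-Fredholm}`. -/
def semiFredholmDomain {X : Type*} [NormedAddCommGroup X] [NormedSpace ℂ X]
    (A : X →L[ℂ] X) : Set ℂ :=
  {lam : ℂ | IsSemiFredholmOp (A - lam • (1 : X →L[ℂ] X))}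

theorem pow_mul_inverse_one_sub {R : Type*} [Ring R] {a : R} (ha : IsUnit (1 - a)) (n : ℕ) :
    a ^ n * Ring.inverse (1 - a) = Ring.inverse (1 - a) - ∑ j ∈ Finset.range n, a ^ j := by
  have h := congrArg (· * Ring.inverse (1 - a)) (geom_sum_mul_neg a n)
  simp only [mul_assoc, Ring.mul_inverse_cancel _ ha, mul_one, sub_mul, one_mul] at h
  rw [h, sub_sub_cancel]

namespace ContinuousLinearMap

section Surjective

variable {𝕜 E F : Type*} [NontriviallyNormedField 𝕜]
  [NormedAddCommGroup E] [NormedSpace 𝕜 E] [NormedAddCommGroup F] [NormedSpace 𝕜 F]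

/-- The iteration in the proof of the open mapping theorem: the residuals halve at each step, so
the approximate preimages of the successive residuals sum to an exact preimage. -/
theorem surjective_of_exists_norm_sub_le_half [CompleteSpace E] (f : E →L[𝕜] F) {C : ℝ}
    (h : ∀ y, ∃ x, ‖y - f x‖ ≤ ‖y‖ / 2 ∧ ‖x‖ ≤ C * ‖y‖) : Surjective f := by
  choose g hg using h
  intro y
  set r : ℕ → F := fun n => (fun z => z - f (g z))^[n] y
  have hr_succ : ∀ n, r (n + 1) = r n - f (g (r n)) := fun n => iterate_succ_apply' _ n y
  have hr : ∀ n, ‖r n‖ ≤ (1 / 2) ^ n * ‖y‖ := by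
    intro n
    induction n with
    | zero => simp [r]
    | succ n ih =>
      rw [hr_succ, pow_succ]
      linarith [(hg (r n)).1]
  have hsum : Summable fun n => g (r n) :=
    .of_norm_bounded ((Summable.of_nonneg_of_le (fun _ => norm_nonneg _) hr
      (summable_geometric_two.mul_right ‖y‖)).mul_left C) fun n => (hg _).2
  have hpartial : ∀ n, f (∑ i ∈ Finset.range n, g (r i)) = y - r n := by
    intro n
    induction n with
    | zero => simp [r]
    | succ n ih => rw [Finset.sum_range_succ, map_add, ih, hr_succ]; abel
  have hres : Tendsto r atTop (𝓝 0) :=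
    squeeze_zero_norm hr (by simpa using
      (tendsto_pow_atTop_nhds_zero_of_lt_one (r := (1 / 2 : ℝ)) (by norm_num)
        (by norm_num)).mul_const ‖y‖)
  refine ⟨∑' n, g (r n), tendsto_nhds_unique
    ((f.continuous.tendsto _).comp hsum.hasSum.tendsto_sum_nat) ?_⟩
  simpa [comp_def, hpartial] using (tendsto_const_nhds (x := y)).sub hres

theorem isOpen_setOf_surjective [CompleteSpace E] [CompleteSpace F] :
    IsOpen {f : E →L[𝕜] F | Surjective f} := by
  refine Metric.isOpen_iff.2 fun T hT => ?_
  obtain ⟨C, hC0, hC⟩ := T.exists_preimage_norm_le hT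
  refine ⟨(2 * C)⁻¹, by positivity, fun U hU =>
    U.surjective_of_exists_norm_sub_le_half (C := C) fun y => ?_⟩
  obtain ⟨x, rfl, hx⟩ := hC y
  refine ⟨x, ?_, hx⟩
  rw [Metric.mem_ball, dist_eq_norm] at hU
  calc ‖T x - U x‖ = ‖(U - T) x‖ := by rw [← norm_neg, sub_apply, neg_sub]
    _ ≤ ‖U - T‖ * ‖x‖ := le_opNorm _ _
    _ ≤ (2 * C)⁻¹ * (C * ‖T x‖) := by gcongr
    _ = ‖T x‖ / 2 := by field_simp

theorem surjective_prod_of_le_ker {T : E →L[𝕜] F} (hT : Surjective T) {V : Submodule 𝕜 E}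
    (hV : V ≤ (T : E →ₗ[𝕜] F).ker) {P : E →L[𝕜] V} (hP : ∀ v : V, P v = v) :
    Surjective (T.prod P) := by
  rintro ⟨y, v⟩
  obtain ⟨z, rfl⟩ := hT y
  have hker : T ((v - P z : V) : E) = 0 := hV (v - P z).2
  refine ⟨z + ((v - P z : V) : E), Prod.ext ?_ ?_⟩
  · change T (z + _) = T z
    rw [map_add, hker, add_zero]
  · simp [hP]

theorem exists_comp_eq_id_of_surjective [CompleteSpace E] [CompleteSpace F] {T : E →L[𝕜] F}
    (hT : Surjective T) (hker : (T : E →ₗ[𝕜] F).ker.ClosedComplemented) :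
    ∃ S : F →L[𝕜] E, T.comp S = ContinuousLinearMap.id 𝕜 F := by
  obtain ⟨P, hP⟩ := hker
  have : CompleteSpace (T : E →ₗ[𝕜] F).ker := T.isClosed_ker.completeSpace_coe
  have hinj : ((T.prod P : E →L[𝕜] F × (T : E →ₗ[𝕜] F).ker) :
      E →ₗ[𝕜] F × (T : E →ₗ[𝕜] F).ker).ker = ⊥ := by
    refine LinearMap.ker_eq_bot'.2 fun z hz => ?_
    simp only [coe_coe, prod_apply, Prod.mk_eq_zero] at hz
    simpa [hP ⟨z, hz.1⟩] using congrArg Subtype.val hz.2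
  let e := ContinuousLinearEquiv.ofBijective _ hinj
    (LinearMap.range_eq_top.2 (surjective_prod_of_le_ker hT le_rfl hP))
  exact ⟨e.symm.toContinuousLinearMap.comp (inl 𝕜 F _), ext fun y =>
    congrArg Prod.fst (e.apply_symm_apply (y, 0))⟩

end Surjective

section Perturbation

variable {𝕜 E : Type*} [NontriviallyNormedField 𝕜] [NormedAddCommGroup E] [NormedSpace 𝕜 E]
  [CompleteSpace E]

theorem surjective_sub_smul_one_and_finrank_ker_eq {T S : E →L[𝕜] E} (hTS : T * S = 1) {z : 𝕜}
    (hz : ‖z‖ * ‖S‖ < 1) :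
    Surjective (T - z • (1 : E →L[𝕜] E)) ∧
      Module.finrank 𝕜 ((T - z • 1 : E →L[𝕜] E) : E →ₗ[𝕜] E).ker =
        Module.finrank 𝕜 (T : E →ₗ[𝕜] E).ker := by
  let U := Units.oneSub (z • S) (by rwa [norm_smul])
  have hTU : T - z • 1 = T * U := by rw [Units.val_oneSub, mul_sub, mul_one, mul_smul_comm, hTS]
  let e := ContinuousLinearEquiv.unitsEquiv 𝕜 E U
  have hT : Surjective T := fun y => ⟨S y, by rw [← mul_apply_eq_comp, hTS, one_apply_eq_self]⟩
  have hker : ((T * U : E →L[𝕜] E) : E →ₗ[𝕜] E).ker =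
      (T : E →ₗ[𝕜] E).ker.map (e.symm : E →ₗ[𝕜] E) :=
    (LinearMap.ker_comp (e : E →ₗ[𝕜] E) _).trans
      (Submodule.comap_equiv_eq_map_symm e.toLinearEquiv _)
  rw [hTU, hker]
  exact ⟨hT.comp e.surjective, LinearEquiv.finrank_map_eq _ _⟩

theorem mem_spectrum_iff_ker_ne_bot {A : E →L[𝕜] E} {μ : 𝕜}
    (h : Surjective (A - μ • (1 : E →L[𝕜] E))) :
    μ ∈ spectrum 𝕜 A ↔ ((A - μ • 1 : E →L[𝕜] E) : E →ₗ[𝕜] E).ker ≠ ⊥ := by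
  rw [spectrum.mem_iff, Algebra.algebraMap_eq_smul_one, ← neg_sub, IsUnit.neg_iff,
    isUnit_iff_bijective, Bijective, and_iff_left h, Ne, LinearMap.ker_eq_bot, coe_coe]

end Perturbation

section RCLike

variable {𝕜 E : Type*} [RCLike 𝕜] [NormedAddCommGroup E] [NormedSpace 𝕜 E] [CompleteSpace E]

/-- `(T, P)` maps onto `E × V` for a projection `P` onto the span `V` of the family, and
surjectivity is an open condition. -/
theorem eventually_exists_linearIndependent_ker_sub_smul_one {T : E →L[𝕜] E}
    (hT : Surjective T) {ι : Type*} [Finite ι] {v : ι → E} (hv : LinearIndependent 𝕜 v)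
    (hvT : ∀ i, T (v i) = 0) :
    ∀ᶠ z in 𝓝 (0 : 𝕜), ∃ w : ι → E, LinearIndependent 𝕜 w ∧ ∀ i, (T - z • 1) (w i) = 0 := by
  let V := Submodule.span 𝕜 (Set.range v)
  have hV : V ≤ (T : E →ₗ[𝕜] E).ker := Submodule.span_le.2 (by rintro _ ⟨i, rfl⟩; exact hvT i)
  have : FiniteDimensional 𝕜 V := .span_of_finite 𝕜 (Set.finite_range v)
  obtain ⟨P, hP⟩ := Submodule.ClosedComplemented.of_finiteDimensional V
  have hcont : Continuous fun z : 𝕜 => (T - z • 1).prod P :=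
    (prodₗᵢ 𝕜).continuous.comp
      ((continuous_const.sub (continuous_id.smul continuous_const)).prodMk continuous_const)
  have hsurj : ∀ᶠ z in 𝓝 (0 : 𝕜), Surjective ((T - z • 1).prod P) := by
    refine hcont.continuousAt.preimage_mem_nhds (isOpen_setOf_surjective.mem_nhds ?_)
    simpa using surjective_prod_of_le_ker hT hV hP
  filter_upwards [hsurj] with z hz
  choose w hw using fun i => hz (0, ⟨v i, Submodule.subset_span ⟨i, rfl⟩⟩)
  refine ⟨w, LinearIndependent.of_comp (V.subtype ∘ₗ (P : E →ₗ[𝕜] V)) ?_,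
    fun i => congrArg Prod.fst (hw i)⟩
  convert hv using 1
  exact funext fun i => congrArg (fun p => (p.2 : E)) (hw i)

theorem rank_ker_le_one_of_frequently_finrank_eq_one {T : E →L[𝕜] E} (hT : Surjective T)
    (h : ∃ᶠ z in 𝓝 (0 : 𝕜), Module.finrank 𝕜 ((T - z • 1 : E →L[𝕜] E) : E →ₗ[𝕜] E).ker = 1) :
    Module.rank 𝕜 (T : E →ₗ[𝕜] E).ker ≤ 1 := by
  set K := (T : E →ₗ[𝕜] E).ker
  by_contra! hK
  have : Nontrivial K := rank_pos_iff_nontrivial.1 (zero_lt_one.trans hK)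
  obtain ⟨e, he⟩ := exists_ne (0 : K)
  obtain ⟨y, hy⟩ := exists_linearIndependent_pair_of_one_lt_rank hK he
  obtain ⟨z, hz, w, hw, hwker⟩ := (h.and_eventually
    (eventually_exists_linearIndependent_ker_sub_smul_one hT (hy.map' K.subtype K.ker_subtype)
      fun i => (![e, y] i).2)).exists
  have := Module.finite_of_finrank_eq_succ hz
  have hcard := (LinearIndependent.of_comp (LinearMap.ker _).subtype
    (show LinearIndependent 𝕜 (_ ∘ fun i => (⟨w i, hwker i⟩ : LinearMap.ker
      ((T - z • 1 : E →L[𝕜] E) : E →ₗ[𝕜] E))) from hw)).fintype_card_le_finrank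
  rw [hz, Fintype.card_fin] at hcard
  exact absurd hcard (by norm_num)

end RCLike

section Resolvent

variable {𝕜 E : Type*} [NontriviallyNormedField 𝕜] [NormedAddCommGroup E] [NormedSpace 𝕜 E]

theorem tendsto_one_sub_smul (B : E →L[𝕜] E) :
    Tendsto (fun z : 𝕜 => 1 - z • B) (𝓝 0) (𝓝 1) := by
  simpa using (tendsto_const_nhds (x := (1 : E →L[𝕜] E))).sub
    ((continuous_id.smul continuous_const).tendsto' (0 : 𝕜) 0 (zero_smul _ B))

theorem eventually_isUnit_one_sub_smul [CompleteSpace E] (B : E →L[𝕜] E) :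
    ∀ᶠ z in 𝓝 (0 : 𝕜), IsUnit (1 - z • B) :=
  (tendsto_one_sub_smul B).eventually (Units.isOpen.mem_nhds isUnit_one)

theorem tendsto_inverse_one_sub_smul [CompleteSpace E] (B : E →L[𝕜] E) :
    Tendsto (fun z : 𝕜 => Ring.inverse (1 - z • B)) (𝓝 0) (𝓝 1) := by
  simpa [comp_def] using (NormedRing.inverse_continuousAt (1 : (E →L[𝕜] E)ˣ)).tendsto.comp
    (by simpa using tendsto_one_sub_smul B)

theorem inverse_one_sub_smul_apply_mem_ker {A B : E →L[𝕜] E} (hAB : A * B = 1) {x : E}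
    (hx : A x = 0) {z : 𝕜} (hz : IsUnit (1 - z • B)) :
    (Ring.inverse (1 - z • B) : E →L[𝕜] E) x ∈ ((A - z • 1 : E →L[𝕜] E) : E →ₗ[𝕜] E).ker := by
  have hfac : A - z • 1 = A * (1 - z • B) := by rw [mul_sub, mul_one, mul_smul_comm, hAB]
  rw [LinearMap.mem_ker, coe_coe, hfac, mul_apply_eq_comp, ← mul_apply_eq_comp (1 - z • B),
    Ring.mul_inverse_cancel _ hz, one_apply_eq_self, hx]

/-- `Bⁿ (1 - z B)⁻¹ x` is a combination of `(1 - z B)⁻¹ x` and of the `Bʲ x` with `j < n`,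
and tends to `Bⁿ x` as `z → 0`. -/
theorem pow_apply_mem_of_eventually_inverse_one_sub_smul_apply_mem [CompleteSpace E]
    (B : E →L[𝕜] E) (x : E) {M : Submodule 𝕜 E} (hM : IsClosed (M : Set E))
    (h : ∀ᶠ z in 𝓝[≠] (0 : 𝕜), (Ring.inverse (1 - z • B) : E →L[𝕜] E) x ∈ M) (n : ℕ) :
    (B ^ n) x ∈ M := by
  induction n using Nat.strong_induction_on with
  | _ n ih =>
  refine hM.mem_of_tendsto (b := 𝓝[≠] (0 : 𝕜))
    (f := fun z => (B ^ n) ((Ring.inverse (1 - z • B) : E →L[𝕜] E) x)) ?_ ?_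
  · simpa [comp_def] using ((B ^ n).continuous.tendsto x).comp
      ((((apply 𝕜 E x).continuous.tendsto 1).comp (tendsto_inverse_one_sub_smul B)).mono_left
        nhdsWithin_le_nhds)
  · filter_upwards [h, self_mem_nhdsWithin, nhdsWithin_le_nhds (eventually_isUnit_one_sub_smul B)]
      with z hz hz0 hzu
    have key := congrArg (fun T : E →L[𝕜] E => T x) (pow_mul_inverse_one_sub hzu n)
    simp only [smul_pow, smul_mul_assoc, sub_apply, smul_apply, mul_apply_eq_comp, sum_apply]
      at key
    rw [← inv_smul_smul₀ (pow_ne_zero n hz0) ((B ^ n) _), key]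
    exact M.smul_mem _ (M.sub_mem hz
      (M.sum_mem fun j hj => M.smul_mem _ (ih j (Finset.mem_range.1 hj))))

theorem eq_top_of_eventually_inverse_one_sub_smul_apply_mem [CompleteSpace E] {B : E →L[𝕜] E}
    {x : E} (hcyc : (Submodule.span 𝕜 (Set.range fun n : ℕ => (B ^ n) x)).topologicalClosure = ⊤)
    {M : Submodule 𝕜 E} (hM : IsClosed (M : Set E))
    (h : ∀ᶠ z in 𝓝[≠] (0 : 𝕜), (Ring.inverse (1 - z • B) : E →L[𝕜] E) x ∈ M) : M = ⊤ := by
  refine eq_top_iff.2 (hcyc ▸ Submodule.topologicalClosure_minimal _ (Submodule.span_le.2 ?_) hM)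
  rintro _ ⟨n, rfl⟩
  exact pow_apply_mem_of_eventually_inverse_one_sub_smul_apply_mem B x hM h n

end Resolvent

end ContinuousLinearMap

section CowenDouglas

variable {X : Type*} [NormedAddCommGroup X] [NormedSpace ℂ X]

def cowenDouglasSet (A : X →L[ℂ] X) : Set ℂ :=
  {μ | Surjective (A - μ • (1 : X →L[ℂ] X)) ∧
    Module.finrank ℂ ((A - μ • 1 : X →L[ℂ] X) : X →ₗ[ℂ] X).ker = 1}

theorem cowenDouglasSet_subset_semiFredholmDomain (A : X →L[ℂ] X) :
    cowenDouglasSet A ⊆ semiFredholmDomain A := fun _ hμ =>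
  ⟨by rw [LinearMap.range_eq_top.2 hμ.1]; exact isClosed_univ,
    Or.inl (Module.finite_of_finrank_eq_succ hμ.2)⟩

variable [CompleteSpace X]

theorem mem_cowenDouglasSet_of_norm_mul_lt {A B : X →L[ℂ] X} (hAB : A * B = 1)
    (hker : Module.finrank ℂ (A : X →ₗ[ℂ] X).ker = 1) {z : ℂ} (hz : ‖z‖ * ‖B‖ < 1) :
    z ∈ cowenDouglasSet A :=
  have h := ContinuousLinearMap.surjective_sub_smul_one_and_finrank_ker_eq hAB hz
  ⟨h.1, h.2.trans hker⟩

theorem isOpen_cowenDouglasSet (A : X →L[ℂ] X) : IsOpen (cowenDouglasSet A) := by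
  refine Metric.isOpen_iff.2 fun μ hμ => ?_
  have := Module.finite_of_finrank_eq_succ hμ.2
  obtain ⟨S, hS⟩ := ContinuousLinearMap.exists_comp_eq_id_of_surjective hμ.1
    (.of_finiteDimensional _)
  refine ⟨(‖S‖ + 1)⁻¹, by positivity, fun ν hν => ?_⟩
  rw [Metric.mem_ball, dist_eq_norm] at hν
  have hz : ‖ν - μ‖ * ‖S‖ < 1 := by
    calc ‖ν - μ‖ * ‖S‖ ≤ ‖ν - μ‖ * (‖S‖ + 1) := by gcongr; linarith
      _ < (‖S‖ + 1)⁻¹ * (‖S‖ + 1) := by gcongr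
      _ = 1 := inv_mul_cancel₀ (by positivity)
  have h := ContinuousLinearMap.surjective_sub_smul_one_and_finrank_ker_eq hS hz
  rw [sub_sub, ← add_smul, add_sub_cancel] at h
  exact ⟨h.1, h.2.trans hμ.2⟩

theorem cowenDouglasSet_subset_spectrum (A : X →L[ℂ] X) : cowenDouglasSet A ⊆ spectrum ℂ A :=
  fun _ hμ => (ContinuousLinearMap.mem_spectrum_iff_ker_ne_bot hμ.1).2 fun h =>
    zero_ne_one (finrank_bot ℂ X ▸ h ▸ hμ.2)

/-- The kernel is nonzero because `μ` lies in the closed spectrum, and it contains no two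
independent vectors because these would persist in the kernels of `A - ν` for `ν` near `μ`. -/
theorem finrank_ker_eq_one_of_mem_closure {A : X →L[ℂ] X} {μ : ℂ}
    (hsurj : Surjective (A - μ • (1 : X →L[ℂ] X))) (hμ : μ ∈ closure (cowenDouglasSet A)) :
    Module.finrank ℂ ((A - μ • 1 : X →L[ℂ] X) : X →ₗ[ℂ] X).ker = 1 := by
  have hK := (ContinuousLinearMap.mem_spectrum_iff_ker_ne_bot hsurj).1
    (closure_minimal (cowenDouglasSet_subset_spectrum A) (spectrum.isClosed A) hμ)
  have hnear : ∃ᶠ z in 𝓝 (0 : ℂ), μ + z ∈ cowenDouglasSet A := by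
    simpa only [← map_add_left_nhds_zero μ, frequently_map] using mem_closure_iff_frequently.1 hμ
  have hrank := ContinuousLinearMap.rank_ker_le_one_of_frequently_finrank_eq_one hsurj
    (hnear.mono fun z hz => by rw [sub_sub, ← add_smul]; exact hz.2)
  exact Module.finrank_eq_of_rank_eq (Nat.cast_one (R := Cardinal) ▸ le_antisymm hrank
    (Cardinal.one_le_iff_pos.2 (pos_iff_ne_zero.2 (Submodule.rank_eq_zero.not.2 hK))))

section Cyclic

variable {A B : X →L[ℂ] X} (hAB : A * B = 1) {x : X} (hx : A x = 0)
  (hcyc : (Submodule.span ℂ (Set.range fun n : ℕ => (B ^ n) x)).topologicalClosure = ⊤)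
include hAB hx hcyc

/-- For `z ≠ μ`, the eigenvector `(1 - z B)⁻¹ x` of `A` for `z` lies in the range of `A - μ`. -/
theorem surjective_sub_smul_one_of_isClosed_range {μ : ℂ}
    (hμ : IsClosed (((A - μ • 1 : X →L[ℂ] X) : X →ₗ[ℂ] X).range : Set X)) :
    Surjective (A - μ • (1 : X →L[ℂ] X)) := by
  refine LinearMap.range_eq_top.1
    (ContinuousLinearMap.eq_top_of_eventually_inverse_one_sub_smul_apply_mem hcyc hμ ?_)
  have hne : ∀ᶠ z in 𝓝[≠] (0 : ℂ), z ≠ μ := by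
    rcases eq_or_ne μ 0 with rfl | hμ0
    exacts [self_mem_nhdsWithin, nhdsWithin_le_nhds (eventually_ne_nhds hμ0.symm)]
  filter_upwards [hne, nhdsWithin_le_nhds (ContinuousLinearMap.eventually_isUnit_one_sub_smul B)]
    with z hzμ hz
  have hk := ContinuousLinearMap.inverse_one_sub_smul_apply_mem_ker hAB hx hz
  generalize (Ring.inverse (1 - z • B) : X →L[ℂ] X) x = k at hk ⊢
  have hAk : (A - μ • 1) k = (z - μ) • k := by
    simp only [LinearMap.mem_ker, ContinuousLinearMap.coe_coe, sub_apply, smul_apply,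
      one_apply_eq_self, sub_eq_zero] at hk
    rw [sub_apply, smul_apply, one_apply_eq_self, hk, sub_smul]
  rw [← inv_smul_smul₀ (sub_ne_zero.2 hzμ) k, ← hAk]
  exact Submodule.smul_mem _ _ (LinearMap.mem_range_self _ k)

theorem closure_cowenDouglasSet_inter_subset :
    closure (cowenDouglasSet A) ∩ semiFredholmDomain A ⊆ cowenDouglasSet A := fun _ ⟨hcl, hsF⟩ =>
  have hsurj := surjective_sub_smul_one_of_isClosed_range hAB hx hcyc hsF.1
  ⟨hsurj, finrank_ker_eq_one_of_mem_closure hsurj hcl⟩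

theorem topologicalClosure_span_ker_eq_top {Λ : Set ℂ} (hΛ : Λ ∈ 𝓝 0) :
    (Submodule.span ℂ (⋃ μ ∈ Λ,
      ((((A - μ • 1 : X →L[ℂ] X) : X →ₗ[ℂ] X).ker : Submodule ℂ X) : Set X))).topologicalClosure
      = ⊤ := by
  refine ContinuousLinearMap.eq_top_of_eventually_inverse_one_sub_smul_apply_mem hcyc
    (Submodule.isClosed_topologicalClosure _) ?_
  filter_upwards [nhdsWithin_le_nhds hΛ,
    nhdsWithin_le_nhds (ContinuousLinearMap.eventually_isUnit_one_sub_smul B)] with z hzΛ hz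
  exact Submodule.le_topologicalClosure _ (Submodule.subset_span (Set.mem_biUnion hzΛ
    (ContinuousLinearMap.inverse_one_sub_smul_apply_mem_ker hAB hx hz)))

end Cyclic

end CowenDouglas

/-- Let `A, B ∈ B(X)` with `A ∘ B = I` and `dim ker A = 1`. If some
nonzero `x ∈ ker A` has `[Bⁿx : n ≥ 0] = X`, then `A ∈ B₁(Ω_A)` where `Ω_A` is the
connected component of the origin in the semi-Fredholm domain of `A`. In particular,
for every `|λ| < 1/‖B‖`, `A − λ` is surjective with one-dimensional kernel, and the
closed linear span of `⋃_{|λ|<1/‖B‖} ker(A − λ)` equals `X`. -/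
theorem mem_cowenDouglas_of_right_inverse_and_cyclic
    (X : Type*) [NormedAddCommGroup X] [NormedSpace ℂ X] [CompleteSpace X]
    (A B : X →L[ℂ] X)
    (hAB : A.comp B = ContinuousLinearMap.id ℂ X)
    (hker : Module.finrank ℂ (LinearMap.ker (A : X →ₗ[ℂ] X)) = 1)
    (x : X) (hx : x ≠ 0) (hxker : A x = 0)
    (hcyc : (Submodule.span ℂ (Set.range fun n : ℕ => (B ^ n) x)).topologicalClosure = ⊤) :
    MemCowenDouglasOne (connectedComponentIn (semiFredholmDomain A) 0) A ∧
    (∀ lam : ℂ, ‖lam‖ < 1 / ‖B‖ →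
      Function.Surjective (A - lam • (1 : X →L[ℂ] X)) ∧
        Module.finrank ℂ (LinearMap.ker ((A - lam • (1 : X →L[ℂ] X) : X →L[ℂ] X) : X →ₗ[ℂ] X)) = 1) ∧
    (Submodule.span ℂ
        (⋃ lam ∈ {lam : ℂ | ‖lam‖ < 1 / ‖B‖},
          ((LinearMap.ker ((A - lam • (1 : X →L[ℂ] X) : X →L[ℂ] X) : X →ₗ[ℂ] X) : Submodule ℂ X) : Set X))
      ).topologicalClosure = ⊤ := by
  have hAB' : A * B = 1 := hAB
  have hB : 0 < ‖B‖ := norm_pos_iff.2 fun h => hx <| by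
    simpa [h] using (congrArg (· x) hAB).symm
  have hball : Metric.ball (0 : ℂ) (1 / ‖B‖) ⊆ cowenDouglasSet A := fun z hz =>
    mem_cowenDouglasSet_of_norm_mul_lt hAB' hker <| by
      rwa [mem_ball_zero_iff, lt_div_iff₀ hB] at hz
  have h0 : (0 : ℂ) ∈ Metric.ball (0 : ℂ) (1 / ‖B‖) := Metric.mem_ball_self (by positivity)
  set Ω := connectedComponentIn (semiFredholmDomain A) 0
  have hΩ : Ω ⊆ cowenDouglasSet A :=
    isPreconnected_connectedComponentIn.subset_of_closure_inter_subset (isOpen_cowenDouglasSet A)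
      ⟨0, mem_connectedComponentIn (cowenDouglasSet_subset_semiFredholmDomain A (hball h0)),
        hball h0⟩
      ((Set.inter_subset_inter_right _ (connectedComponentIn_subset _ _)).trans
        (closure_cowenDouglasSet_inter_subset hAB' hxker hcyc))
  have hballΩ : Metric.ball (0 : ℂ) (1 / ‖B‖) ⊆ Ω :=
    (convex_ball _ _).isPreconnected.subset_connectedComponentIn h0
      (hball.trans (cowenDouglasSet_subset_semiFredholmDomain A))
  have hnhds : Metric.ball (0 : ℂ) (1 / ‖B‖) ∈ 𝓝 0 := Metric.ball_mem_nhds _ (by positivity)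
  exact ⟨⟨hΩ.trans (cowenDouglasSet_subset_spectrum A),
      topologicalClosure_span_ker_eq_top hAB' hxker hcyc (Filter.mem_of_superset hnhds hballΩ),
      fun μ hμ => (hΩ hμ).1, fun μ hμ => (hΩ hμ).2⟩,
    fun z hz => hball (mem_ball_zero_iff.2 hz),
    topologicalClosure_span_ker_eq_top hAB' hxker hcyc
      ((isOpen_lt continuous_norm continuous_const).mem_nhds (by simpa using hB))⟩
end

section
/- Let X be a complex Banach space, A ∈ B(X), and let Y ⊆ X be a closed invariant subspace of A. Let A|_Y ∈ B(Y) be the restriction and Aʸ ∈ B(X/Y) the quotient operator defined by Aʸ(x + Y) = Ax + Y. Then invertibility of any two of the three operators A, A|_Y, Aʸ implies invertibility of the third. Consequently: (1) σ(A) ⊆ σ(A|_Y) ∪ σ(Aʸ); (2) σ(A|_Y) ⊆ σ(A) ∪ σ(Aʸ); (3) σ(Aʸ) ⊆ σ(A) ∪ σ(A|_Y). -/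
lemma three_op_aux
    (X : Type*) [NormedAddCommGroup X] [NormedSpace ℂ X] [CompleteSpace X]
    (A : X →L[ℂ] X) (Y : Submodule ℂ X) (hY : IsClosed (Y : Set X))
    (hinv : ∀ x ∈ Y, A x ∈ Y)
    (AY : Y →L[ℂ] Y) (hAY : ∀ y : Y, (AY y : X) = A y)
    (Aq : (X ⧸ Y) →L[ℂ] (X ⧸ Y))
    (hAq : ∀ x : X, Aq (Submodule.Quotient.mk x) = Submodule.Quotient.mk (A x)) :
    (IsUnit AY ∧ IsUnit Aq → IsUnit A) ∧
    (IsUnit A ∧ IsUnit Aq → IsUnit AY) ∧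
    (IsUnit A ∧ IsUnit AY → IsUnit Aq) := by
  haveI : IsClosed (Y : Set X) := hY
  haveI : CompleteSpace Y := hY.completeSpace_coe
  rw [ContinuousLinearMap.isUnit_iff_bijective, ContinuousLinearMap.isUnit_iff_bijective,
    ContinuousLinearMap.isUnit_iff_bijective]
  have hmk : ∀ x : X, (Submodule.Quotient.mk x : X ⧸ Y) = 0 ↔ x ∈ Y := fun x =>
    Submodule.Quotient.mk_eq_zero Y
  refine ⟨?_, ?_, ?_⟩
  · rintro ⟨⟨hYi, hYs⟩, ⟨hqi, hqs⟩⟩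
    constructor
    · intro x₁ x₂ h
      have h' : A (x₁ - x₂) = 0 := by simp [map_sub, h]
      have hq0 : Aq (Submodule.Quotient.mk (x₁ - x₂)) = 0 := by rw [hAq, h']; simp
      have hmem : x₁ - x₂ ∈ Y := by
        rw [← hmk]
        have := hqi (a₁ := Submodule.Quotient.mk (x₁ - x₂)) (a₂ := 0) (by simpa using hq0)
        simpa using this
      have h0 : AY ⟨x₁ - x₂, hmem⟩ = 0 := by
        apply Subtype.ext; rw [hAY]; simpa using h'
      have := hYi (a₁ := ⟨x₁ - x₂, hmem⟩) (a₂ := 0) (by simpa using h0)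
      have h2 : x₁ - x₂ = 0 := congrArg Subtype.val this
      exact sub_eq_zero.mp h2
    · intro z
      obtain ⟨q, hq⟩ := hqs (Submodule.Quotient.mk z)
      obtain ⟨x, rfl⟩ := Submodule.Quotient.mk_surjective Y q
      have hz : z - A x ∈ Y := by
        rw [← hmk]
        rw [hAq] at hq
        simp [Submodule.Quotient.mk_sub, hq]
      obtain ⟨y, hy⟩ := hYs ⟨z - A x, hz⟩
      refine ⟨x + (y : X), ?_⟩
      have h3 : A (y : X) = z - A x := by
        have := congrArg Subtype.val hy
        rw [hAY] at this; exact this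
      simp only [map_add, h3]; abel
  · rintro ⟨⟨hi, hs⟩, ⟨hqi, hqs⟩⟩
    constructor
    · intro y₁ y₂ h
      apply Subtype.ext
      apply hi
      have := congrArg Subtype.val h
      rw [hAY, hAY] at this; exact this
    · rintro ⟨z, hz⟩
      obtain ⟨x, hx⟩ := hs z
      have hxq : (Submodule.Quotient.mk x : X ⧸ Y) = 0 := by
        apply hqi
        rw [hAq, hx]
        simp [(hmk z).2 hz]
      have hxY : x ∈ Y := (hmk x).1 hxq
      refine ⟨⟨x, hxY⟩, ?_⟩
      apply Subtype.ext
      rw [hAY]; exact hx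
  · rintro ⟨⟨hi, hs⟩, ⟨hYi, hYs⟩⟩
    constructor
    · intro q₁ q₂ h
      obtain ⟨x₁, rfl⟩ := Submodule.Quotient.mk_surjective Y q₁
      obtain ⟨x₂, rfl⟩ := Submodule.Quotient.mk_surjective Y q₂
      rw [hAq, hAq] at h
      have hmem : A x₁ - A x₂ ∈ Y := by
        rw [← hmk, Submodule.Quotient.mk_sub]
        exact sub_eq_zero.mpr h
      obtain ⟨y, hy⟩ := hYs ⟨A x₁ - A x₂, hmem⟩
      have h3 : A (y : X) = A x₁ - A x₂ := by
        have := congrArg Subtype.val hy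
        rwa [hAY] at this
      have h4 : A (x₁ - x₂ - y) = 0 := by
        simp [map_sub, h3]
      have h5 : x₁ - x₂ - (y : X) = 0 := hi (by simpa using h4)
      have h6 : x₁ - x₂ = (y : X) := sub_eq_zero.mp h5
      exact (Submodule.Quotient.eq Y).mpr (h6 ▸ y.2)
    · intro q
      obtain ⟨z, rfl⟩ := Submodule.Quotient.mk_surjective Y q
      obtain ⟨x, hx⟩ := hs z
      exact ⟨Submodule.Quotient.mk x, by rw [hAq, hx]⟩


/-- Let `X` be a complex Banach space, `A ∈ B(X)`, and `Y ⊆ X` a closed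
invariant subspace of `A`, with restriction `A|_Y` and quotient operator `Aʸ` on `X/Y`.
Then invertibility of any two of `A`, `A|_Y`, `Aʸ` implies invertibility of the third;
consequently `σ(A) ⊆ σ(A|_Y) ∪ σ(Aʸ)`, `σ(A|_Y) ⊆ σ(A) ∪ σ(Aʸ)` and
`σ(Aʸ) ⊆ σ(A) ∪ σ(A|_Y)`. -/
theorem three_operator_property
    (X : Type*) [NormedAddCommGroup X] [NormedSpace ℂ X] [CompleteSpace X]
    (A : X →L[ℂ] X) (Y : Submodule ℂ X) (hY : IsClosed (Y : Set X))
    (hinv : ∀ x ∈ Y, A x ∈ Y)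
    (AY : Y →L[ℂ] Y) (hAY : ∀ y : Y, (AY y : X) = A y)
    (Aq : (X ⧸ Y) →L[ℂ] (X ⧸ Y))
    (hAq : ∀ x : X, Aq (Submodule.Quotient.mk x) = Submodule.Quotient.mk (A x)) :
    ((IsUnit AY ∧ IsUnit Aq → IsUnit A) ∧
     (IsUnit A ∧ IsUnit Aq → IsUnit AY) ∧
     (IsUnit A ∧ IsUnit AY → IsUnit Aq)) ∧
    (spectrum ℂ A ⊆ spectrum ℂ AY ∪ spectrum ℂ Aq) ∧
    (spectrum ℂ AY ⊆ spectrum ℂ A ∪ spectrum ℂ Aq) ∧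
    (spectrum ℂ Aq ⊆ spectrum ℂ A ∪ spectrum ℂ AY) := by
  have key : ∀ z : ℂ,
      (IsUnit (algebraMap ℂ (Y →L[ℂ] Y) z - AY) ∧ IsUnit (algebraMap ℂ ((X ⧸ Y) →L[ℂ] (X ⧸ Y)) z - Aq)
        → IsUnit (algebraMap ℂ (X →L[ℂ] X) z - A)) ∧
      (IsUnit (algebraMap ℂ (X →L[ℂ] X) z - A) ∧ IsUnit (algebraMap ℂ ((X ⧸ Y) →L[ℂ] (X ⧸ Y)) z - Aq)
        → IsUnit (algebraMap ℂ (Y →L[ℂ] Y) z - AY)) ∧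
      (IsUnit (algebraMap ℂ (X →L[ℂ] X) z - A) ∧ IsUnit (algebraMap ℂ (Y →L[ℂ] Y) z - AY)
        → IsUnit (algebraMap ℂ ((X ⧸ Y) →L[ℂ] (X ⧸ Y)) z - Aq)) := by
    intro z
    refine three_op_aux X (algebraMap ℂ (X →L[ℂ] X) z - A) Y hY ?_ _ ?_ _ ?_
    · intro x hx
      simp only [ContinuousLinearMap.sub_apply, ContinuousLinearMap.algebraMap_apply,
        ContinuousLinearMap.smul_apply, ContinuousLinearMap.one_apply]
      exact Y.sub_mem (Y.smul_mem _ hx) (hinv x hx)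
    · intro y
      simp only [ContinuousLinearMap.sub_apply, ContinuousLinearMap.algebraMap_apply,
        ContinuousLinearMap.smul_apply, ContinuousLinearMap.one_apply, Submodule.coe_sub,
        Submodule.coe_smul, hAY]
    · intro x
      simp only [ContinuousLinearMap.sub_apply, ContinuousLinearMap.algebraMap_apply,
        ContinuousLinearMap.smul_apply, ContinuousLinearMap.one_apply, hAq,
        Submodule.Quotient.mk_sub, Submodule.Quotient.mk_smul]
  refine ⟨three_op_aux X A Y hY hinv AY hAY Aq hAq, ?_, ?_, ?_⟩
  · intro z hz
    by_contra h
    rw [Set.mem_union] at h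
    push_neg at h
    exact spectrum.notMem_iff.mpr ((key z).1
      ⟨spectrum.notMem_iff.mp h.1, spectrum.notMem_iff.mp h.2⟩) hz
  · intro z hz
    by_contra h
    rw [Set.mem_union] at h
    push_neg at h
    exact spectrum.notMem_iff.mpr ((key z).2.1
      ⟨spectrum.notMem_iff.mp h.1, spectrum.notMem_iff.mp h.2⟩) hz
  · intro z hz
    by_contra h
    rw [Set.mem_union] at h
    push_neg at h
    exact spectrum.notMem_iff.mpr ((key z).2.2
      ⟨spectrum.notMem_iff.mp h.1, spectrum.notMem_iff.mp h.2⟩) hz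
end
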